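/- Let G ~ G(p) be an inhomogeneous random graph on [n] with p_max ≤ 1/2, and let k be a positive integer. Then Var(|Z_k|) ≤ E[|Z_k|] + 3 n² p_max. -/

import Mathlib

open MeasureTheory ProbabilityTheory Filter Real
open scoped ENNReal Classical

noncomputable section

namespace GraphMatching

variable {n : ℕ}

/-- The ordered representative of the unordered pair `{i, j}`. -/
def eidx (i j : Fin n) : Fin n × Fin n := if i ≤ j then (i, j) else (j, i)

/-- A space of edge indicators, one for each (ordered) pair of vertices;
only the representatives with `i ≤ j` are ever read off. -/
abbrev EdgeSpace (n : ℕ) := Fin n × Fin n → Bool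

/-- Bernoulli measure on `Bool` with success probability `p` (clamped to `[0,1]`). -/
def bern (p : ℝ) : Measure Bool :=
  (PMF.bernoulli (min (Real.toNNReal p) 1) (min_le_right _ _)).toMeasure

/-- The law of an inhomogeneous random graph `G(p)`, encoded by independent edge
indicators with `P((i,j) present) = p i j` for the representative pairs. -/
def edgeMeasure (n : ℕ) (p : Fin n → Fin n → ℝ) : Measure (EdgeSpace n) :=
  Measure.pi fun e => bern (p e.1 e.2)

/-- The adjacency relation of the graph encoded by `g`. -/
def adjOf (g : EdgeSpace n) (i j : Fin n) : Prop := i ≠ j ∧ g (eidx i j) = true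

/-- The degree of vertex `i` in the graph encoded by `g`. -/
def deg (g : EdgeSpace n) (i : Fin n) : ℕ :=
  (Finset.univ.filter fun j => adjOf g i j).card

/-- `|Z_k|`: the number of vertices of degree at most `k`. -/
def Zcard (k : ℕ) (g : EdgeSpace n) : ℕ :=
  (Finset.univ.filter fun i => deg g i ≤ k).card

end GraphMatching

end

/-!
Write `|Z_k| = ∑ᵢ Xᵢ` with `Xᵢ = 1{deg i ≤ k}`, so that `Var |Z_k| = ∑ᵢ ∑ⱼ Cov(Xᵢ, Xⱼ)`.
An indicator has `Var Xᵢ ≤ E Xᵢ`. For `i ≠ j`, let `Xᵢ'`, `Xⱼ'` be the indicators computed after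
deleting the edge `ij`: they are functions of the disjoint edge sets at `i` and at `j` other than
`ij`, hence independent, and they agree with `Xᵢ`, `Xⱼ` unless `ij` is present. Comparing
`Cov(Xᵢ, Xⱼ)` with `Cov(Xᵢ', Xⱼ') = 0` gives `Cov(Xᵢ, Xⱼ) ≤ 2 pᵢⱼ`, and summing,
`Var |Z_k| ≤ E |Z_k| + 2 n² p_max`.
-/

namespace ProbabilityTheory

theorem indepFun_pi_of_dependsOn {ι : Type*} [Fintype ι] {Ω : ι → Type*}
    [∀ i, MeasurableSpace (Ω i)] [∀ i, Countable (Ω i)] [∀ i, MeasurableSingletonClass (Ω i)]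
    {μ : ∀ i, Measure (Ω i)} [∀ i, IsProbabilityMeasure (μ i)]
    {β γ : Type*} [MeasurableSpace β] [MeasurableSpace γ] [Nonempty β] [Nonempty γ]
    {f : (∀ i, Ω i) → β} {h : (∀ i, Ω i) → γ} {s : Set ι}
    (hf : DependsOn f s) (hh : DependsOn h sᶜ) :
    IndepFun f h (Measure.pi μ) := by
  obtain ⟨F, rfl⟩ := dependsOn_iff_exists_comp.1 (hf.mono s.coe_toFinset.ge)
  obtain ⟨H, rfl⟩ := dependsOn_iff_exists_comp.1 (hh.mono sᶜ.coe_toFinset.ge)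
  have hcoord := iIndepFun_pi (μ := μ) (X := fun _ => id) fun _ => aemeasurable_id
  exact (hcoord.indepFun_finset s.toFinset sᶜ.toFinset (by simpa using disjoint_compl_right)
    fun i => measurable_pi_apply i).comp Measurable.of_discrete Measurable.of_discrete

section

variable {Ω : Type*} {mΩ : MeasurableSpace Ω} {μ : Measure Ω} [IsProbabilityMeasure μ]

theorem memLp_two_of_forall_mem_Icc {X : Ω → ℝ} {a b : ℝ} (hX : Measurable X)
    (hXab : ∀ ω, X ω ∈ Set.Icc a b) : MemLp X 2 μ :=
  memLp_of_bounded (ae_of_all _ hXab) hX.aestronglyMeasurable 2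

theorem variance_le_integral_of_mem_Icc {X : Ω → ℝ} (hX : AEMeasurable X μ)
    (hX01 : ∀ ω, X ω ∈ Set.Icc 0 1) : Var[X; μ] ≤ μ[X] := by
  have := variance_le_sub_mul_sub (ae_of_all μ hX01) hX
  nlinarith [sq_nonneg μ[X]]

theorem covariance_le_measureReal_of_eq_zero_off {X Y : Ω → ℝ} {E : Set Ω}
    (hX : Measurable X) (hY : Measurable Y) (hE : MeasurableSet E)
    (hX1 : ∀ ω, |X ω| ≤ 1) (hXE : ∀ ω ∉ E, X ω = 0) (hY01 : ∀ ω, Y ω ∈ Set.Icc 0 1) :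
    cov[X, Y; μ] ≤ μ.real E := by
  have hXL : MemLp X 2 μ := memLp_two_of_forall_mem_Icc hX fun ω => abs_le.1 (hX1 ω)
  have hYL : MemLp Y 2 μ := memLp_two_of_forall_mem_Icc hY hY01
  have hmean : μ[Y] ∈ Set.Icc 0 1 :=
    ⟨integral_nonneg fun ω => (hY01 ω).1, by
      simpa using integral_mono (hYL.integrable one_le_two) (integrable_const 1)
        fun ω => (hY01 ω).2⟩
  have hpt : ∀ ω, |X ω * (Y ω - μ[Y])| ≤ E.indicator 1 ω := by
    intro ω
    by_cases hω : ω ∈ E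
    · have hYc : |Y ω - μ[Y]| ≤ 1 :=
        abs_sub_le_of_nonneg_of_le (hY01 ω).1 (hY01 ω).2 hmean.1 hmean.2
      simpa [hω, abs_mul] using mul_le_one₀ (hX1 ω) (abs_nonneg _) hYc
    · simp [hXE ω hω, hω]
  have hcov : cov[X, Y; μ] = ∫ ω, X ω * (Y ω - μ[Y]) ∂μ := by
    simp_rw [mul_sub]
    rw [covariance_eq_sub hXL hYL, integral_sub (f := fun ω => X ω * Y ω)
      (hXL.integrable_mul hYL) ((hXL.integrable one_le_two).mul_const _), integral_mul_const]
    rfl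
  rw [hcov, ← integral_indicator_one hE]
  refine integral_mono ?_ ((integrable_const 1).indicator hE)
    fun ω => (le_abs_self _).trans (hpt ω)
  refine .of_bound (hX.mul (hY.sub_const _)).aestronglyMeasurable 1 (ae_of_all _ fun ω => ?_)
  exact (hpt ω).trans (Set.indicator_le_self' (fun _ _ => zero_le_one) ω)

theorem covariance_le_two_mul_measureReal_of_eq_off {a b c d : Ω → ℝ} {E : Set Ω}
    (ha : Measurable a) (hb : Measurable b) (hc : Measurable c) (hd : Measurable d)
    (hE : MeasurableSet E) (ha01 : ∀ ω, a ω ∈ Set.Icc 0 1) (hb01 : ∀ ω, b ω ∈ Set.Icc 0 1)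
    (hc01 : ∀ ω, c ω ∈ Set.Icc 0 1) (hd01 : ∀ ω, d ω ∈ Set.Icc 0 1)
    (hab : ∀ ω ∉ E, a ω = b ω) (hcd : ∀ ω ∉ E, c ω = d ω) (hbd : IndepFun b d μ) :
    cov[a, c; μ] ≤ 2 * μ.real E := by
  have haL : MemLp a 2 μ := memLp_two_of_forall_mem_Icc ha ha01
  have hbL : MemLp b 2 μ := memLp_two_of_forall_mem_Icc hb hb01
  have hcL : MemLp c 2 μ := memLp_two_of_forall_mem_Icc hc hc01
  have hdL : MemLp d 2 μ := memLp_two_of_forall_mem_Icc hd hd01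
  have hsplit : cov[a, c; μ] = cov[a - b, c; μ] + cov[c - d, b; μ] + cov[b, d; μ] := by
    rw [covariance_sub_left haL hbL hcL, covariance_sub_left hcL hdL hbL,
      covariance_comm c, covariance_comm d]
    ring
  have hdiff : ∀ {x y : Ω → ℝ}, (∀ ω, x ω ∈ Set.Icc 0 1) → (∀ ω, y ω ∈ Set.Icc 0 1) →
      ∀ ω, |(x - y) ω| ≤ 1 := fun hx hy ω =>
    abs_sub_le_of_nonneg_of_le (hx ω).1 (hx ω).2 (hy ω).1 (hy ω).2
  have hac := covariance_le_measureReal_of_eq_zero_off (μ := μ) (ha.sub hb) hc hE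
    (hdiff ha01 hb01) (fun ω hω => sub_eq_zero.2 (hab ω hω)) hc01
  have hcb := covariance_le_measureReal_of_eq_zero_off (μ := μ) (hc.sub hd) hb hE
    (hdiff hc01 hd01) (fun ω hω => sub_eq_zero.2 (hcd ω hω)) hb01
  rw [hsplit, hbd.covariance_eq_zero hbL hdL]
  linarith

end

end ProbabilityTheory

namespace GraphMatching

variable {n : ℕ}

theorem eidx_comm (i j : Fin n) : eidx i j = eidx j i := by
  unfold eidx
  split_ifs with h₁ h₂ h₂
  · rw [le_antisymm h₁ h₂]
  · rfl
  · rfl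
  · exact absurd (le_of_not_ge h₁) h₂

theorem eidx_eq_eidx_iff {a b c d : Fin n} :
    eidx a b = eidx c d ↔ (a = c ∧ b = d) ∨ (a = d ∧ b = c) := by
  refine ⟨fun h => ?_, ?_⟩
  · unfold eidx at h
    split_ifs at h <;> simp_all [Prod.ext_iff]
  · rintro (⟨rfl, rfl⟩ | ⟨rfl, rfl⟩)
    · rfl
    · exact eidx_comm _ _

theorem dependsOn_deg_update (F : ℕ → ℝ) (e : Fin n × Fin n) (i : Fin n) :
    DependsOn (fun g : EdgeSpace n => F (deg (Function.update g e false) i))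
      (Set.range (eidx i) \ {e}) := by
  intro g g' hgg'
  simp only [deg, adjOf, Function.update_apply]
  congr 2
  refine Finset.filter_congr fun l _ => and_congr_right fun _ => ?_
  by_cases hl : eidx i l = e
  · simp [hl]
  · rw [if_neg hl, if_neg hl, hgg' _ ⟨⟨l, rfl⟩, hl⟩]

theorem disjoint_range_eidx_diff {i j : Fin n} (hij : i ≠ j) :
    Disjoint (Set.range (eidx i) \ {eidx i j}) (Set.range (eidx j) \ {eidx i j}) := by
  rw [Set.disjoint_left]
  rintro _ ⟨⟨l, rfl⟩, hl⟩ ⟨⟨l', hl'⟩, -⟩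
  rcases eidx_eq_eidx_iff.1 hl' with ⟨h, -⟩ | ⟨rfl, rfl⟩
  · exact hij h.symm
  · exact hl rfl

instance (q : ℝ) : IsProbabilityMeasure (bern q) := by
  unfold bern; infer_instance

instance (p : Fin n → Fin n → ℝ) : IsProbabilityMeasure (edgeMeasure n p) := by
  unfold edgeMeasure; infer_instance

theorem measureReal_edge_le (p : Fin n → Fin n → ℝ) (e : Fin n × Fin n)
    (hp : 0 ≤ p e.1 e.2) : (edgeMeasure n p).real {g | g e = true} ≤ p e.1 e.2 := by
  have hmarg : edgeMeasure n p {g | g e = true} = bern (p e.1 e.2) {true} :=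
    (measurePreserving_eval (fun e : Fin n × Fin n => bern (p e.1 e.2)) e).measure_preimage
      (measurableSet_singleton true).nullMeasurableSet
  rw [measureReal_def, hmarg, bern, PMF.toMeasure_apply_singleton _ _ (measurableSet_singleton _)]
  -- `PMF.bernoulli q _ true` is `q` by definition
  change ((min (p e.1 e.2).toNNReal 1 : NNReal) : ℝ≥0∞).toReal ≤ p e.1 e.2
  rw [ENNReal.coe_toReal]
  exact (NNReal.coe_le_coe.2 (min_le_left _ _)).trans (Real.coe_toNNReal _ hp).le

theorem covariance_comp_deg_le {F G : ℕ → ℝ} (hF : ∀ d, F d ∈ Set.Icc 0 1)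
    (hG : ∀ d, G d ∈ Set.Icc 0 1) (p : Fin n → Fin n → ℝ) {i j : Fin n} (hij : i ≠ j) :
    cov[fun g => F (deg g i), fun g => G (deg g j); edgeMeasure n p] ≤
      2 * (edgeMeasure n p).real {g | g (eidx i j) = true} := by
  have hoff : ∀ g : EdgeSpace n, g ∉ {g | g (eidx i j) = true} →
      Function.update g (eidx i j) false = g :=
    fun g hg => Function.update_eq_self_iff.2 (by simpa using hg)
  refine covariance_le_two_mul_measureReal_of_eq_off
    (b := fun g => F (deg (Function.update g (eidx i j) false) i))
    (d := fun g => G (deg (Function.update g (eidx i j) false) j))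
    .of_discrete .of_discrete .of_discrete .of_discrete .of_discrete
    (fun _ => hF _) (fun _ => hF _) (fun _ => hG _) (fun _ => hG _)
    (fun g hg => by simp only [hoff g hg]) (fun g hg => by simp only [hoff g hg]) ?_
  exact indepFun_pi_of_dependsOn (dependsOn_deg_update F _ i)
    ((dependsOn_deg_update G _ j).mono (disjoint_range_eidx_diff hij).subset_compl_left)

theorem variance_sum_comp_deg_le {F : ℕ → ℝ} (hF : ∀ d, F d ∈ Set.Icc 0 1)
    (p : Fin n → Fin n → ℝ) (hp0 : ∀ i j, 0 ≤ p i j) :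
    Var[fun g => ∑ i, F (deg g i); edgeMeasure n p] ≤
      ∑ i, (edgeMeasure n p)[fun g => F (deg g i)] +
        2 * (n : ℝ) ^ 2 * ⨆ e : Fin n × Fin n, p e.1 e.2 := by
  set μ := edgeMeasure n p
  set pmax := ⨆ e : Fin n × Fin n, p e.1 e.2
  have hpmax : ∀ e : Fin n × Fin n, p e.1 e.2 ≤ pmax := le_ciSup (Finite.bddAbove_range _)
  have hpmax0 : 0 ≤ pmax := Real.iSup_nonneg fun e => hp0 _ _
  have hcov : ∀ i j : Fin n, cov[fun g => F (deg g i), fun g => F (deg g j); μ] ≤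
      (if i = j then μ[fun g => F (deg g i)] else 0) + 2 * pmax := by
    intro i j
    split_ifs with hij
    · subst hij
      rw [covariance_self Measurable.of_discrete.aemeasurable]
      linarith [variance_le_integral_of_mem_Icc (μ := μ) Measurable.of_discrete.aemeasurable
        fun g => hF (deg g i)]
    · linarith [covariance_comp_deg_le hF hF p hij, measureReal_edge_le p (eidx i j) (hp0 _ _),
        hpmax (eidx i j)]
  rw [variance_fun_sum fun i => MemLp.of_discrete]
  calc ∑ i, ∑ j, cov[fun g => F (deg g i), fun g => F (deg g j); μ]
      ≤ ∑ i, ∑ j, ((if i = j then μ[fun g => F (deg g i)] else 0) + 2 * pmax) :=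
        Finset.sum_le_sum fun i _ => Finset.sum_le_sum fun j _ => hcov i j
    _ = ∑ i, μ[fun g => F (deg g i)] + 2 * (n : ℝ) ^ 2 * pmax := by
        simp [Finset.sum_add_distrib]; ring

theorem cast_Zcard_eq_sum (k : ℕ) (g : EdgeSpace n) :
    (Zcard k g : ℝ) = ∑ i, if deg g i ≤ k then 1 else 0 := by
  rw [Zcard, Finset.card_filter]
  push_cast
  rfl

end GraphMatching

open GraphMatching in
theorem Zk_variance_bound_general
    (n : ℕ) (p : Fin n → Fin n → ℝ)
    (hp0 : ∀ i j, 0 ≤ p i j)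
    (k : ℕ) :
    (∫ g, ((Zcard k g : ℝ) - ∫ g', (Zcard k g' : ℝ) ∂edgeMeasure n p) ^ 2
        ∂edgeMeasure n p) ≤
      (∫ g, (Zcard k g : ℝ) ∂edgeMeasure n p) +
        3 * (n : ℝ) ^ 2 * ⨆ e : Fin n × Fin n, p e.1 e.2 := by
  set μ := edgeMeasure n p
  have hZ : (fun g : EdgeSpace n => (Zcard k g : ℝ)) =
      fun g => ∑ i, if deg g i ≤ k then 1 else 0 := funext (cast_Zcard_eq_sum k)
  have hvar : ∫ g, ((Zcard k g : ℝ) - ∫ g', (Zcard k g' : ℝ) ∂μ) ^ 2 ∂μ =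
      Var[fun g : EdgeSpace n => (Zcard k g : ℝ); μ] :=
    (variance_eq_integral Measurable.of_discrete.aemeasurable).symm
  have hmean : ∫ g, (Zcard k g : ℝ) ∂μ = ∑ i, μ[fun g => if deg g i ≤ k then 1 else 0] := by
    rw [hZ, integral_finsetSum _ fun i _ => Integrable.of_finite]
  have hindicator : ∀ d : ℕ, (if d ≤ k then (1 : ℝ) else 0) ∈ Set.Icc 0 1 := fun d => by
    split_ifs <;> norm_num
  have hpmax0 : 0 ≤ ⨆ e : Fin n × Fin n, p e.1 e.2 := Real.iSup_nonneg fun e => hp0 _ _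
  rw [hvar, hmean, hZ]
  nlinarith [variance_sum_comp_deg_le hindicator p hp0, mul_nonneg (sq_nonneg (n : ℝ)) hpmax0]

open GraphMatching in
/-- variance bound for `|Z_k|`:
if `p_max ≤ 1/2` then `Var(|Z_k|) ≤ E[|Z_k|] + 3 n² p_max`. -/
theorem Zk_variance_bound
    (n : ℕ) (p : Fin n → Fin n → ℝ)
    (hsym : ∀ i j, p i j = p j i)
    (hp0 : ∀ i j, 0 ≤ p i j) (hp1 : ∀ i j, p i j ≤ 1)
    (hdiag : ∀ i, p i i = 0)
    (hpmax : (⨆ e : Fin n × Fin n, p e.1 e.2) ≤ 1 / 2)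
    (k : ℕ) (hk : 0 < k) :
    (∫ g, ((Zcard k g : ℝ) - ∫ g', (Zcard k g' : ℝ) ∂edgeMeasure n p) ^ 2
        ∂edgeMeasure n p) ≤
      (∫ g, (Zcard k g : ℝ) ∂edgeMeasure n p) +
        3 * (n : ℝ) ^ 2 * ⨆ e : Fin n × Fin n, p e.1 e.2 :=
  Zk_variance_bound_general n p hp0 k
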